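/- A unimodular lattice L in R^n contains a 3-frame (a set of n pairwise orthogonal vectors each of norm 3) if and only if L is isomorphic to A_3(C) for some ternary self-dual code C of length n. -/

import Mathlib

/-- The dual of a set of vectors in `ℝⁿ`. -/
def dualLattice {n : ℕ} (L : Set (Fin n → ℝ)) : Set (Fin n → ℝ) :=
  {v | ∀ w ∈ L, ∃ m : ℤ, ∑ i, v i * w i = (m : ℝ)}

/-- The lattice `A₃(C) = (1/√3){x ∈ ℤⁿ : x mod 3 ∈ C}`. -/
noncomputable def A3 {n : ℕ} (C : Submodule (ZMod 3) (Fin n → ZMod 3)) :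
    Set (Fin n → ℝ) :=
  {v | ∃ x : Fin n → ℤ, (∀ i, v i = (x i : ℝ) / Real.sqrt 3) ∧
    (fun i => (x i : ZMod 3)) ∈ C}

/-! Given a 3-frame `f` in `L`, the map `x ↦ (1/√3) ∑ xᵢ fᵢ` is orthogonal and sends `√3 eᵢ`
to `fᵢ`, so it identifies `L` with a unimodular lattice `M ∋ √3 eᵢ`. Integrality against the
vectors `√3 eᵢ` puts `M` inside `(1/√3) ℤⁿ`, and `M` is a union of cosets of `√3 ℤⁿ`; hence
`M = A₃(C)` for the code `C` of reductions mod 3 of `√3 M`. Since `(a/√3)·(b/√3) = a·b/3`,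
integrality of `M` says `C ⊆ C^⊥` and `M ⊇ M^*` says `C^⊥ ⊆ C`. Conversely `√3 eᵢ ∈ A₃(C)` for
every code `C`, and an isometry carries them to a 3-frame. -/

open Matrix

variable {n : ℕ}

theorem mem_dualLattice {S : Set (Fin n → ℝ)} {v : Fin n → ℝ} :
    v ∈ dualLattice S ↔ ∀ w ∈ S, ∃ m : ℤ, v ⬝ᵥ w = m :=
  Iff.rfl

theorem Matrix.dotProduct_mulVec_mulVec_of_transpose_mul_self {ι R : Type*} [Fintype ι]
    [DecidableEq ι] [CommRing R] {A : Matrix ι ι R} (hA : Aᵀ * A = 1)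
    (x y : ι → R) : A *ᵥ x ⬝ᵥ A *ᵥ y = x ⬝ᵥ y := by
  rw [dotProduct_mulVec, ← vecMul_transpose, vecMul_vecMul, hA, vecMul_one]

section Frame

variable {ι : Type*} [Fintype ι] [DecidableEq ι] {r : ℝ} {f : ι → ι → ℝ}

noncomputable def frameMatrix (r : ℝ) (f : ι → ι → ℝ) : Matrix ι ι ℝ :=
  (√r)⁻¹ • (of f)ᵀ

theorem frameMatrix_transpose_mul_self (hr : 0 < r)
    (hf : ∀ i j, f i ⬝ᵥ f j = if i = j then r else 0) :
    (frameMatrix r f)ᵀ * frameMatrix r f = 1 := by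
  have hsq : (√r)⁻¹ * (√r)⁻¹ = r⁻¹ := by
    rw [← mul_inv, Real.mul_self_sqrt hr.le]
  ext i j
  rw [frameMatrix, transpose_smul, transpose_transpose, smul_mul_smul_comm, hsq,
    Matrix.smul_apply, mul_apply']
  change r⁻¹ • (f i ⬝ᵥ f j) = _
  rw [hf, one_apply, smul_eq_mul, mul_ite, inv_mul_cancel₀ hr.ne', mul_zero]

theorem frameMatrix_mulVec_single (hr : 0 < r) (i : ι) :
    frameMatrix r f *ᵥ Pi.single i (√r) = f i := by
  ext t
  rw [mulVec, dotProduct_single, frameMatrix, Matrix.smul_apply, transpose_apply, of_apply,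
    smul_eq_mul, mul_right_comm, inv_mul_cancel₀ (Real.sqrt_pos.mpr hr).ne', one_mul]

end Frame

theorem dualLattice_preimage (g : (Fin n → ℝ) ≃ₗ[ℝ] (Fin n → ℝ))
    (hg : ∀ x y, g x ⬝ᵥ g y = x ⬝ᵥ y) (S : Set (Fin n → ℝ)) :
    dualLattice (g ⁻¹' S) = g ⁻¹' dualLattice S := by
  ext v
  simp only [mem_dualLattice, Set.mem_preimage]
  constructor
  · intro h w hw
    obtain ⟨u, rfl⟩ := g.surjective w
    exact hg v u ▸ h u hw
  · intro h w hw
    exact hg v w ▸ h (g w) hw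

noncomputable def divSqrtThree : (Fin n → ℤ) →+ (Fin n → ℝ) where
  toFun a i := a i / √3
  map_zero' := by ext; simp
  map_add' a b := by ext; simp [add_div]

theorem divSqrtThree_apply (a : Fin n → ℤ) (i : Fin n) : divSqrtThree a i = a i / √3 := rfl

noncomputable def modThree : (Fin n → ℤ) →+ (Fin n → ZMod 3) :=
  (Int.castAddHom (ZMod 3)).compLeft (Fin n)

theorem modThree_apply (a : Fin n → ℤ) (i : Fin n) : modThree a i = a i := rfl

theorem modThree_dotProduct (a b : Fin n → ℤ) :
    modThree a ⬝ᵥ modThree b = ((a ⬝ᵥ b : ℤ) : ZMod 3) :=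
  ((Int.castRingHom (ZMod 3)).map_dotProduct a b).symm

theorem mem_A3 {C : Submodule (ZMod 3) (Fin n → ZMod 3)} {v : Fin n → ℝ} :
    v ∈ A3 C ↔ ∃ a : Fin n → ℤ, v = divSqrtThree a ∧ modThree a ∈ C := by
  simp only [A3, Set.mem_ofPred_eq, funext_iff, divSqrtThree_apply]
  rfl

theorem single_sqrt_three_mem_A3 (C : Submodule (ZMod 3) (Fin n → ZMod 3)) (i : Fin n) :
    Pi.single i √3 ∈ A3 C := by
  refine mem_A3.mpr ⟨Pi.single i 3, ?_, ?_⟩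
  · ext t
    rw [divSqrtThree_apply, Pi.single_apply, Pi.single_apply]
    split_ifs
    · exact_mod_cast (Real.div_sqrt (x := 3)).symm
    · rw [Int.cast_zero, zero_div]
  · convert C.zero_mem
    ext t
    rw [modThree_apply, Pi.zero_apply, Pi.single_apply]
    split_ifs <;> rfl

theorem divSqrtThree_dotProduct (a b : Fin n → ℤ) :
    divSqrtThree a ⬝ᵥ divSqrtThree b = ((a ⬝ᵥ b : ℤ) : ℝ) / 3 := by
  simp only [dotProduct, divSqrtThree_apply, div_mul_div_comm, Real.mul_self_sqrt zero_le_three,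
    ← Finset.sum_div]
  push_cast
  rfl

theorem exists_divSqrtThree_dotProduct_eq_intCast_iff (a b : Fin n → ℤ) :
    (∃ m : ℤ, divSqrtThree a ⬝ᵥ divSqrtThree b = m) ↔
      modThree a ⬝ᵥ modThree b = 0 := by
  rw [modThree_dotProduct, divSqrtThree_dotProduct, ZMod.intCast_zmod_eq_zero_iff_dvd]
  constructor
  · rintro ⟨m, hm⟩
    refine ⟨m, ?_⟩
    rw [div_eq_iff three_ne_zero] at hm
    exact_mod_cast hm.trans (mul_comm _ _)
  · rintro ⟨m, hm⟩
    refine ⟨m, ?_⟩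
    rw [hm]
    push_cast
    ring

noncomputable def ternaryCode (M : AddSubgroup (Fin n → ℝ)) :
    Submodule (ZMod 3) (Fin n → ZMod 3) :=
  AddSubgroup.toZModSubmodule 3 ((M.comap divSqrtThree).map modThree)

section Lattice

variable {M : AddSubgroup (Fin n → ℝ)}

theorem AddSubgroup.mul_mem_of_forall_single_mem {c : ℝ} (hM : ∀ i, Pi.single i c ∈ M)
    (k : Fin n → ℤ) :
    (fun i => (k i : ℝ) * c) ∈ M := by
  rw [← Finset.univ_sum_single (fun i => (k i : ℝ) * c)]
  refine M.sum_mem fun i _ => ?_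
  rw [← zsmul_eq_mul, Pi.single_smul]
  exact M.zsmul_mem (hM i) _

theorem exists_eq_divSqrtThree_of_mem (hint : (M : Set (Fin n → ℝ)) ⊆ dualLattice M)
    (h3 : ∀ i, Pi.single i √3 ∈ M) {v : Fin n → ℝ} (hv : v ∈ M) :
    ∃ a, v = divSqrtThree a := by
  have hcoord (i : Fin n) : ∃ m : ℤ, v i * √3 = m := by
    simpa only [dotProduct_single] using mem_dualLattice.mp (hint hv) _ (h3 i)
  choose a ha using hcoord
  refine ⟨a, funext fun i => ?_⟩
  rw [divSqrtThree_apply, eq_div_iff (Real.sqrt_pos.mpr three_pos).ne', ha]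

theorem divSqrtThree_mem_of_modThree_eq (h3 : ∀ i, Pi.single i √3 ∈ M) {a b : Fin n → ℤ}
    (hab : modThree a = modThree b) (ha : divSqrtThree a ∈ M) : divSqrtThree b ∈ M := by
  have hdvd (i : Fin n) : ∃ k : ℤ, b i - a i = 3 * k := by
    exact_mod_cast (ZMod.intCast_eq_intCast_iff_dvd_sub _ _ 3).mp (congrFun hab i)
  choose k hk using hdvd
  have hdiff : divSqrtThree (b - a) = fun i => (k i : ℝ) * √3 := by
    ext i
    rw [divSqrtThree_apply, Pi.sub_apply, hk, Int.cast_mul, Int.cast_ofNat, mul_comm,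
      mul_div_assoc, Real.div_sqrt]
  rw [← add_sub_cancel a b, map_add]
  exact M.add_mem ha (hdiff ▸ M.mul_mem_of_forall_single_mem h3 k)

theorem mem_ternaryCode {x : Fin n → ZMod 3} :
    x ∈ ternaryCode M ↔ ∃ a, divSqrtThree a ∈ M ∧ modThree a = x :=
  Iff.rfl

theorem A3_ternaryCode (hint : (M : Set (Fin n → ℝ)) ⊆ dualLattice M)
    (h3 : ∀ i, Pi.single i √3 ∈ M) : A3 (ternaryCode M) = M := by
  ext v
  rw [mem_A3]
  constructor
  · rintro ⟨a, rfl, ha⟩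
    obtain ⟨b, hb, hba⟩ := mem_ternaryCode.mp ha
    exact divSqrtThree_mem_of_modThree_eq h3 hba hb
  · intro hv
    obtain ⟨a, rfl⟩ := exists_eq_divSqrtThree_of_mem hint h3 hv
    exact ⟨a, rfl, mem_ternaryCode.mpr ⟨a, hv, rfl⟩⟩

theorem mem_ternaryCode_iff_forall_dotProduct_eq_zero
    (hM : (M : Set (Fin n → ℝ)) = dualLattice M) (h3 : ∀ i, Pi.single i √3 ∈ M)
    (x : Fin n → ZMod 3) : x ∈ ternaryCode M ↔ ∀ c ∈ ternaryCode M, x ⬝ᵥ c = 0 := by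
  constructor
  · intro hx c hc
    obtain ⟨a, ha, rfl⟩ := mem_ternaryCode.mp hx
    obtain ⟨b, hb, rfl⟩ := mem_ternaryCode.mp hc
    rw [← SetLike.mem_coe, hM] at ha
    exact (exists_divSqrtThree_dotProduct_eq_intCast_iff a b).mp (mem_dualLattice.mp ha _ hb)
  · intro hx
    obtain ⟨a, rfl⟩ : ∃ a, modThree a = x := ZMod.intCast_surjective.comp_left x
    refine mem_ternaryCode.mpr ⟨a, ?_, rfl⟩
    rw [← SetLike.mem_coe, hM, mem_dualLattice]
    intro w hw
    obtain ⟨b, rfl⟩ := exists_eq_divSqrtThree_of_mem hM.le h3 hw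
    exact (exists_divSqrtThree_dotProduct_eq_intCast_iff a b).mpr
      (hx _ (mem_ternaryCode.mpr ⟨b, hw, rfl⟩))

end Lattice

theorem stmt17 (n : ℕ) (L : AddSubgroup (Fin n → ℝ))
    (huni : (L : Set (Fin n → ℝ)) = dualLattice (L : Set (Fin n → ℝ))) :
    (∃ f : Fin n → (Fin n → ℝ), (∀ i, f i ∈ L) ∧
        ∀ i j, ∑ t, f i t * f j t = if i = j then (3 : ℝ) else 0) ↔
      ∃ C : Submodule (ZMod 3) (Fin n → ZMod 3),
        (∀ x : Fin n → ZMod 3, x ∈ C ↔ ∀ c ∈ C, ∑ i, x i * c i = 0) ∧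
        ∃ g : (Fin n → ℝ) ≃ₗ[ℝ] (Fin n → ℝ),
          (∀ x y : Fin n → ℝ, ∑ i, g x i * g y i = ∑ i, x i * y i) ∧
          g '' A3 C = (L : Set (Fin n → ℝ)) := by
  constructor
  · rintro ⟨f, hfL, hf⟩
    have hA := frameMatrix_transpose_mul_self three_pos hf
    let g := (frameMatrix 3 f).toLinearEquiv' (invertibleOfLeftInverse _ _ hA)
    have hg : ∀ x y, g x ⬝ᵥ g y = x ⬝ᵥ y :=
      dotProduct_mulVec_mulVec_of_transpose_mul_self hA
    let M := L.comap (g : (Fin n → ℝ) →+ (Fin n → ℝ))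
    have hM : (M : Set (Fin n → ℝ)) = dualLattice M := by
      change g ⁻¹' L = dualLattice (g ⁻¹' L)
      rw [dualLattice_preimage g hg, ← huni]
    have h3 (i : Fin n) : Pi.single i √3 ∈ M := by
      change frameMatrix 3 f *ᵥ Pi.single i √3 ∈ L
      rw [frameMatrix_mulVec_single three_pos]
      exact hfL i
    refine ⟨ternaryCode M, mem_ternaryCode_iff_forall_dotProduct_eq_zero hM h3, g, hg, ?_⟩
    rw [A3_ternaryCode hM.le h3]
    exact Set.image_preimage_eq (L : Set (Fin n → ℝ)) g.surjective
  · rintro ⟨C, -, g, hg, hgL⟩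
    refine ⟨fun i => g (Pi.single i √3), fun i => ?_, fun i j => ?_⟩
    · rw [← SetLike.mem_coe, ← hgL]
      exact Set.mem_image_of_mem g (single_sqrt_three_mem_A3 C i)
    · rw [hg]
      change Pi.single i √3 ⬝ᵥ Pi.single j √3 = _
      rw [single_dotProduct, Pi.single_apply, mul_ite, mul_zero,
        Real.mul_self_sqrt zero_le_three]
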